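/- arXiv:1112.6122 — 4 statements merged into one kernel-verified Lean document; each statement's English description precedes it below -/
import Mathlib

section
/- For 1 ≤ p < ∞, the operator T defined on measurable functions f : (0,∞) → ℝ by (Tf)(r) = -∫_r^∞ f(s)/s ds is bounded on L^p((0,∞), r dr), i.e. ‖Tf‖_{L^p(r dr)} ≲_p ‖f‖_{L^p(r dr)}. -/
/-!
Fix `r > 0`. Hölder's inequality on `(r, ∞)` against `s⁻¹ ∈ L^q(ds)` gives the pointwise bound
`r |Tf(r)|^p ≤ (p-1)^(p-1) ∫_r^∞ |f(s)|^p ds` (for `p = 1` simply because `r ≤ s`). Integrating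
in `dr` over `(0, ∞)` and exchanging the order of integration turns the right-hand side into
`(p-1)^(p-1) ∫_0^∞ |f(s)|^p s ds`, so `‖Tf‖_p ≤ (p-1)^((p-1)/p) ‖f‖_p`.
-/

open MeasureTheory Set
open scoped ENNReal NNReal

/-- The measure `r dr` on `(0,∞)`. -/
noncomputable def muRad : Measure ℝ :=
  (volume.restrict (Set.Ioi (0:ℝ))).withDensity (fun r => ENNReal.ofReal r)

theorem eLpNorm_le_rpow_mul_of_lintegral_le {α ε ε' : Type*} [MeasurableSpace α] [ENorm ε]
    [ENorm ε'] {μ : Measure α} {p : ℝ≥0∞} (hp0 : p ≠ 0) (hp : p ≠ ∞) {f : α → ε} {g : α → ε'}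
    {K : ℝ≥0} (h : ∫⁻ x, ‖g x‖ₑ ^ p.toReal ∂μ ≤ K * ∫⁻ x, ‖f x‖ₑ ^ p.toReal ∂μ) :
    eLpNorm g p μ ≤ ↑(K ^ (1 / p.toReal)) * eLpNorm f p μ := by
  have hp' : 0 < 1 / p.toReal := one_div_pos.2 (ENNReal.toReal_pos hp0 hp)
  rw [eLpNorm_eq_lintegral_rpow_enorm_toReal hp0 hp, eLpNorm_eq_lintegral_rpow_enorm_toReal hp0 hp,
    ENNReal.coe_rpow_of_nonneg _ hp'.le, ← ENNReal.mul_rpow_of_nonneg _ _ hp'.le]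
  exact ENNReal.rpow_le_rpow h hp'.le

theorem lintegral_muRad (g : ℝ → ℝ≥0∞) :
    ∫⁻ r, g r ∂muRad = ∫⁻ r in Ioi 0, ENNReal.ofReal r * g r :=
  lintegral_withDensity_eq_lintegral_mul_non_measurable _ ENNReal.measurable_ofReal
    (ae_of_all _ fun _ => ENNReal.ofReal_lt_top) g

theorem lintegral_Ioi_lintegral_Ioi {G : ℝ → ℝ≥0∞} (hG : Measurable G) :
    ∫⁻ r in Ioi 0, ∫⁻ s in Ioi r, G s = ∫⁻ s in Ioi 0, ENNReal.ofReal s * G s := by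
  have hmeas : Measurable (Function.uncurry fun r s : ℝ => if r < s then G s else 0) :=
    Measurable.ite (measurableSet_lt measurable_fst measurable_snd) (hG.comp measurable_snd)
      measurable_const
  calc ∫⁻ r in Ioi 0, ∫⁻ s in Ioi r, G s
      = ∫⁻ r in Ioi 0, ∫⁻ s in Ioi 0, if r < s then G s else 0 := by
        refine setLIntegral_congr_fun measurableSet_Ioi fun r hr => ?_
        have hind : (fun s => if r < s then G s else 0) = (Ioi r).indicator G := by
          ext s; simp [indicator]
        rw [hind, lintegral_indicator measurableSet_Ioi,
          Measure.restrict_restrict measurableSet_Ioi,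
          inter_eq_self_of_subset_left (Ioi_subset_Ioi (le_of_lt hr))]
    _ = ∫⁻ s in Ioi 0, ∫⁻ r in Ioi 0, if r < s then G s else 0 :=
        lintegral_lintegral_swap hmeas.aemeasurable
    _ = ∫⁻ s in Ioi 0, ENNReal.ofReal s * G s := by
        refine setLIntegral_congr_fun measurableSet_Ioi fun s hs => ?_
        have hind : (fun r => if r < s then G s else 0) = (Iio s).indicator fun _ => G s := by
          ext r; simp [indicator]
        rw [hind, lintegral_indicator measurableSet_Iio,
          setLIntegral_const, Measure.restrict_apply measurableSet_Iio, Iio_inter_Ioi,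
          Real.volume_Ioo, sub_zero, mul_comm]

theorem lintegral_muRad_le_of_forall_le {F G : ℝ → ℝ≥0∞} (hG : Measurable G) {K : ℝ≥0∞}
    (hK : K ≠ ∞) (h : ∀ r, 0 < r → ENNReal.ofReal r * F r ≤ K * ∫⁻ s in Ioi r, G s) :
    ∫⁻ r, F r ∂muRad ≤ K * ∫⁻ s, G s ∂muRad := by
  rw [lintegral_muRad, lintegral_muRad, ← lintegral_Ioi_lintegral_Ioi hG,
    ← lintegral_const_mul' _ _ hK]
  exact setLIntegral_mono' measurableSet_Ioi h

theorem enorm_integral_Ioi_div_le (f : ℝ → ℝ) {r : ℝ} (hr : 0 ≤ r) :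
    ‖∫ s in Ioi r, f s / s‖ₑ ≤ ∫⁻ s in Ioi r, ‖f s‖ₑ / ENNReal.ofReal s := by
  refine (enorm_integral_le_lintegral_enorm _).trans_eq
    (setLIntegral_congr_fun measurableSet_Ioi fun s hs => ?_)
  have hs : 0 < s := hr.trans_lt hs
  rw [← ofReal_norm, ← ofReal_norm, norm_div, Real.norm_of_nonneg hs.le,
    ENNReal.ofReal_div_of_pos hs]

theorem lintegral_Ioi_inv_rpow {q : ℝ} (hq : 1 < q) {r : ℝ} (hr : 0 < r) :
    ∫⁻ s in Ioi r, (ENNReal.ofReal s)⁻¹ ^ q = ENNReal.ofReal (r ^ (1 - q) / (q - 1)) := by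
  have hpow : ∀ s ∈ Ioi r, (ENNReal.ofReal s)⁻¹ ^ q = ENNReal.ofReal (s ^ (-q)) := fun s hs => by
    have hs : 0 < s := hr.trans hs
    rw [ENNReal.inv_rpow, ENNReal.ofReal_rpow_of_pos hs,
      ← ENNReal.ofReal_inv_of_pos (Real.rpow_pos_of_pos hs _), Real.rpow_neg hs.le]
  rw [setLIntegral_congr_fun measurableSet_Ioi hpow,
    ← ofReal_integral_eq_lintegral_ofReal (integrableOn_Ioi_rpow_of_lt (by linarith) hr)
      ((ae_restrict_iff' measurableSet_Ioi).2 (ae_of_all _ fun s hs =>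
        (Real.rpow_pos_of_pos (hr.trans hs) _).le)),
    integral_Ioi_rpow_of_lt (by linarith) hr, neg_add_eq_sub, neg_div, ← div_neg, neg_sub]

theorem Real.HolderConjugate.rpow_one_sub_div_sub_one_rpow {p q : ℝ} (hpq : p.HolderConjugate q)
    {r : ℝ} (hr : 0 < r) : (r ^ (1 - q) / (q - 1)) ^ (p - 1) = (p - 1) ^ (p - 1) / r := by
  have hpq' : (q - 1) * (p - 1) = 1 := by linear_combination hpq.sub_one_mul_conj
  have hq : q - 1 = (p - 1)⁻¹ := eq_inv_of_mul_eq_one_left hpq'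
  rw [Real.div_rpow (Real.rpow_nonneg hr.le _) hpq.symm.sub_one_pos.le, ← Real.rpow_mul hr.le,
    show (1 - q) * (p - 1) = -1 by linear_combination -hpq', Real.rpow_neg_one, hq,
    Real.inv_rpow hpq.sub_one_pos.le, div_inv_eq_mul, inv_mul_eq_div]

theorem ofReal_mul_lintegral_Ioi_div_le (g : ℝ → ℝ≥0∞) (r : ℝ) :
    ENNReal.ofReal r * ∫⁻ s in Ioi r, g s / ENNReal.ofReal s ≤ ∫⁻ s in Ioi r, g s := by
  rw [← lintegral_const_mul' _ _ ENNReal.ofReal_ne_top]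
  refine setLIntegral_mono' measurableSet_Ioi fun s hs => ?_
  calc ENNReal.ofReal r * (g s / ENNReal.ofReal s)
      ≤ ENNReal.ofReal s * (g s / ENNReal.ofReal s) := by gcongr; exact le_of_lt hs
    _ ≤ g s := ENNReal.mul_div_le

theorem ofReal_mul_lintegral_Ioi_div_rpow_le_of_holderConjugate {p q : ℝ}
    (hpq : p.HolderConjugate q) {r : ℝ} (hr : 0 < r) {g : ℝ → ℝ≥0∞}
    (hg : AEMeasurable g (volume.restrict (Ioi r))) :
    ENNReal.ofReal r * (∫⁻ s in Ioi r, g s / ENNReal.ofReal s) ^ p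
      ≤ ENNReal.ofReal ((p - 1) ^ (p - 1)) * ∫⁻ s in Ioi r, g s ^ p := by
  set A := ∫⁻ s in Ioi r, g s ^ p
  set B := ENNReal.ofReal (r ^ (1 - q) / (q - 1))
  have holder : ∫⁻ s in Ioi r, g s / ENNReal.ofReal s ≤ A ^ (1 / p) * B ^ (1 / q) := by
    rw [show B = _ from (lintegral_Ioi_inv_rpow hpq.symm.lt hr).symm]
    exact ENNReal.lintegral_mul_le_Lp_mul_Lq _ hpq hg ENNReal.measurable_ofReal.inv.aemeasurable
  have hB : B ^ (p / q) = ENNReal.ofReal ((p - 1) ^ (p - 1)) / ENNReal.ofReal r := by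
    rw [ENNReal.ofReal_rpow_of_pos (div_pos (Real.rpow_pos_of_pos hr _) hpq.symm.sub_one_pos),
      hpq.div_conj_eq_sub_one, hpq.rpow_one_sub_div_sub_one_rpow hr, ENNReal.ofReal_div_of_pos hr]
  calc ENNReal.ofReal r * (∫⁻ s in Ioi r, g s / ENNReal.ofReal s) ^ p
      ≤ ENNReal.ofReal r * (A ^ (1 / p) * B ^ (1 / q)) ^ p := by gcongr; exact hpq.nonneg
    _ = ENNReal.ofReal ((p - 1) ^ (p - 1)) * A := by
      rw [ENNReal.mul_rpow_of_nonneg _ _ hpq.nonneg, ← ENNReal.rpow_mul, ← ENNReal.rpow_mul,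
        one_div_mul_cancel hpq.ne_zero, ENNReal.rpow_one, one_div_mul_eq_div, hB,
        mul_left_comm, ENNReal.mul_div_cancel (by simpa using hr) ENNReal.ofReal_ne_top, mul_comm]

theorem ofReal_mul_lintegral_Ioi_div_rpow_le {p : ℝ} (hp : 1 ≤ p) {r : ℝ} (hr : 0 < r)
    {g : ℝ → ℝ≥0∞} (hg : AEMeasurable g (volume.restrict (Ioi r))) :
    ENNReal.ofReal r * (∫⁻ s in Ioi r, g s / ENNReal.ofReal s) ^ p
      ≤ ENNReal.ofReal ((p - 1) ^ (p - 1)) * ∫⁻ s in Ioi r, g s ^ p := by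
  rcases hp.eq_or_lt with rfl | hp
  · simpa using ofReal_mul_lintegral_Ioi_div_le g r
  · exact ofReal_mul_lintegral_Ioi_div_rpow_le_of_holderConjugate (.conjExponent hp) hr hg

/-- For `1 ≤ p < ∞`, the operator `Tf(r) = -∫_r^∞ f(s)/s ds` is bounded on `L^p(r dr)`. -/
theorem stmt0 (p : ℝ≥0∞) (hp1 : 1 ≤ p) (hp2 : p ≠ ⊤) :
    ∃ C : ℝ≥0, 0 < C ∧ ∀ f : ℝ → ℝ, Measurable f →
      eLpNorm (fun r => -∫ s in Set.Ioi r, f s / s) p muRad ≤ C * eLpNorm f p muRad := by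
  have hp : 1 ≤ p.toReal := by simpa using ENNReal.toReal_mono hp2 hp1
  set K := (p.toReal - 1) ^ (p.toReal - 1)
  have hK : 0 < K := by
    refine (Real.rpow_nonneg (by linarith) _).lt_of_ne' fun h => ?_
    rw [Real.rpow_eq_zero_iff_of_nonneg (by linarith)] at h
    exact h.2 h.1
  refine ⟨K.toNNReal ^ (1 / p.toReal), NNReal.rpow_pos (Real.toNNReal_pos.2 hK), fun f hf => ?_⟩
  refine eLpNorm_le_rpow_mul_of_lintegral_le (by positivity) hp2
    (lintegral_muRad_le_of_forall_le (hf.enorm.pow_const _) ENNReal.ofReal_ne_top fun r hr => ?_)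
  calc ENNReal.ofReal r * ‖-∫ s in Ioi r, f s / s‖ₑ ^ p.toReal
      ≤ ENNReal.ofReal r * (∫⁻ s in Ioi r, ‖f s‖ₑ / ENNReal.ofReal s) ^ p.toReal := by
        rw [enorm_neg]; gcongr; exact enorm_integral_Ioi_div_le f hr.le
    _ ≤ ENNReal.ofReal K * ∫⁻ s in Ioi r, ‖f s‖ₑ ^ p.toReal :=
        ofReal_mul_lintegral_Ioi_div_rpow_le hp hr hf.enorm.aemeasurable
end

section
/- Every function f in the space Ḣ¹_e, defined by the norm ‖f‖²_{Ḣ¹_e} = ‖∂_r f‖²_{L²(r dr)} + ‖f/r‖²_{L²(r dr)} being finite, is continuous on (0,∞) and satisfies lim_{r→0} f(r) = 0 and lim_{r→∞} f(r) = 0. -/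
open MeasureTheory Set
open scoped ENNReal NNReal

/-!
With `F = ‖f‖²`, Cauchy–Schwarz and AM-GM give `|F'| ≤ ‖f'‖² r + ‖f‖² / r`, and both terms are
integrable on `(0,∞)` by hypothesis. Hence `F` has limits at `0⁺` and at `∞`. Since `F / r` is
integrable there as well while `1 / r` is integrable neither near `0` nor near `∞`, both limits
vanish.
-/

open Filter Topology

theorem integrableOn_Ioi_sq_norm_mul_of_memLp_muRad {E : Type*} [NormedAddCommGroup E]
    {g : ℝ → E} (hg : MemLp g 2 muRad) : IntegrableOn (fun r => ‖g r‖ ^ 2 * r) (Ioi 0) := by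
  have h := (integrable_withDensity_iff ENNReal.measurable_ofReal
    (ae_of_all _ fun r => ENNReal.ofReal_lt_top)).1
      ((memLp_two_iff_integrable_sq_norm hg.1).1 hg)
  refine h.congr ?_
  filter_upwards [ae_restrict_mem measurableSet_Ioi] with r hr
  rw [ENNReal.toReal_ofReal hr.le]

theorem abs_two_mul_inner_le_sq_mul_add_sq_div {E : Type*} [NormedAddCommGroup E]
    [InnerProductSpace ℝ E] (u v : E) {r : ℝ} (hr : 0 < r) :
    |2 * inner ℝ u v| ≤ ‖v‖ ^ 2 * r + ‖u‖ ^ 2 / r := by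
  have hCS : |inner ℝ u v| ≤ ‖u‖ * ‖v‖ := abs_real_inner_le_norm u v
  have hAMGM : 2 * (‖u‖ * ‖v‖) ≤ ‖v‖ ^ 2 * r + ‖u‖ ^ 2 / r := by
    have : ‖v‖ ^ 2 * r + ‖u‖ ^ 2 / r - 2 * (‖u‖ * ‖v‖) = (‖v‖ * r - ‖u‖) ^ 2 / r := by
      field_simp
      ring
    nlinarith [div_nonneg (sq_nonneg (‖v‖ * r - ‖u‖)) hr.le]
  rw [abs_mul, abs_two]
  linarith

theorem integrableOn_Ioi_two_mul_inner {E : Type*} [NormedAddCommGroup E]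
    [InnerProductSpace ℝ E] [CompleteSpace E] {f f' : ℝ → E}
    (hderiv : ∀ r ∈ Ioi 0, HasDerivAt f (f' r) r)
    (hf' : IntegrableOn (fun r => ‖f' r‖ ^ 2 * r) (Ioi 0))
    (hf : IntegrableOn (fun r => ‖f r‖ ^ 2 / r) (Ioi 0)) :
    IntegrableOn (fun r => 2 * inner ℝ (f r) (f' r)) (Ioi 0) := by
  have hmeas : AEStronglyMeasurable (fun r => 2 * inner ℝ (f r) (f' r))
      (volume.restrict (Ioi 0)) := by
    have hcont : ContinuousOn f (Ioi 0) := fun r hr =>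
      (hderiv r hr).continuousAt.continuousWithinAt
    refine (((hcont.aestronglyMeasurable measurableSet_Ioi).inner
      (aestronglyMeasurable_deriv f _)).const_mul 2).congr ?_
    filter_upwards [ae_restrict_mem measurableSet_Ioi] with r hr
    rw [(hderiv r hr).deriv]
  refine (hf'.add hf).mono' hmeas ?_
  filter_upwards [ae_restrict_mem measurableSet_Ioi] with r hr
  exact abs_two_mul_inner_le_sq_mul_add_sq_div (f r) (f' r) hr

theorem tendsto_nhdsGT_of_hasDerivAt_of_integrableOn_Ioc {E : Type*} [NormedAddCommGroup E]
    [NormedSpace ℝ E] [CompleteSpace E] {f f' : ℝ → E} {a b : ℝ} (hab : a < b)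
    (hderiv : ∀ x ∈ Ioc a b, HasDerivAt f (f' x) x) (hint : IntegrableOn f' (Ioc a b)) :
    Tendsto f (𝓝[>] a) (𝓝 (f b + ∫ t in b..a, f' t)) := by
  have hii : IntervalIntegrable f' volume b a :=
    (intervalIntegrable_iff_integrableOn_Ioc_of_le hab.le).2 hint |>.symm
  have hprim : ContinuousWithinAt (fun x => f b + ∫ t in b..x, f' t) (Ioi a) a := by
    have h :=
      (intervalIntegral.continuousOn_primitive_interval' hii left_mem_uIcc).const_add (f b)
    rw [uIcc_of_ge hab.le] at h
    exact (h a (left_mem_Icc.2 hab.le)).mono_of_mem_nhdsWithin (Icc_mem_nhdsGT hab)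
  refine hprim.tendsto.congr' ?_
  filter_upwards [Ioc_mem_nhdsGT hab] with x hx
  have hsub : uIcc b x ⊆ Ioc a b := by
    rw [uIcc_of_ge hx.2]
    exact Icc_subset_Ioc_iff hx.2 |>.2 ⟨hx.1, le_rfl⟩
  rw [intervalIntegral.integral_eq_sub_of_hasDerivAt (fun y hy => hderiv y (hsub hy))
    (hii.mono_set (hsub.trans (by rw [uIcc_of_ge hab.le]; exact Ioc_subset_Icc_self)))]
  abel

theorem not_integrableAtFilter_inv_atTop : ¬ IntegrableAtFilter (fun r : ℝ => r⁻¹) atTop := by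
  rintro ⟨s, hs, hint⟩
  obtain ⟨R, hR⟩ := mem_atTop_sets.1 hs
  exact not_integrableOn_Ioi_inv (hint.mono_set fun r hr => hR r hr.le)

theorem not_integrableAtFilter_inv_nhdsGT_zero :
    ¬ IntegrableAtFilter (fun r : ℝ => r⁻¹) (𝓝[>] 0) := by
  rintro ⟨s, hs, hint⟩
  obtain ⟨δ, hδ, hsub⟩ := mem_nhdsGT_iff_exists_Ioc_subset.1 hs
  have hii : IntervalIntegrable (fun r : ℝ => r⁻¹) volume 0 δ :=
    (intervalIntegrable_iff_integrableOn_Ioc_of_le hδ.le).2 (hint.mono_set hsub)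
  rcases intervalIntegrable_inv_iff.1 hii with h | h
  · exact hδ.ne h
  · exact h left_mem_uIcc

theorem eq_zero_of_tendsto_of_integrableAtFilter_inv_smul {E : Type*} [NormedAddCommGroup E]
    [NormedSpace ℝ E] {l : Filter ℝ} [l.IsMeasurablyGenerated]
    (hl : ¬ IntegrableAtFilter (fun r : ℝ => r⁻¹) l)
    {g : ℝ → E} {L : E} (hg : Tendsto g l (𝓝 L))
    (hint : IntegrableAtFilter (fun r => r⁻¹ • g r) l) : L = 0 := by
  by_contra hL
  have hL2 : 0 < ‖L‖ / 2 := by positivity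
  have hbig : (fun r : ℝ => r⁻¹) =O[l] (fun r => r⁻¹ • g r) := by
    refine Asymptotics.IsBigO.of_bound (‖L‖ / 2)⁻¹ ?_
    filter_upwards [(tendsto_order.1 hg.norm).1 _ (half_lt_self (norm_pos_iff.2 hL))] with r hr
    rw [norm_smul, mul_left_comm]
    exact le_mul_of_one_le_right (norm_nonneg _) ((one_le_inv_mul₀ hL2).2 hr.le)
  exact hl (hbig.integrableAtFilter
    measurable_inv.stronglyMeasurable.stronglyMeasurableAtFilter hint)

theorem tendsto_zero_of_tendsto_sq_norm {α E : Type*} [NormedAddCommGroup E] {l : Filter α}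
    {f : α → E} (h : Tendsto (fun x => ‖f x‖ ^ 2) l (𝓝 0)) : Tendsto f l (𝓝 0) := by
  rw [tendsto_zero_iff_norm_tendsto_zero]
  simpa [Real.sqrt_sq (norm_nonneg _)] using h.sqrt

/-- Every `f ∈ Ḣ¹_e` (i.e. `∂_r f, f/r ∈ L²(r dr)`) is continuous on `(0,∞)` and has
limit `0` at `r → 0` and `r → ∞`. -/
theorem stmt3 (f f' : ℝ → ℂ)
    (hderiv : ∀ r ∈ Set.Ioi (0:ℝ), HasDerivAt f (f' r) r)
    (h1 : MemLp f' 2 muRad)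
    (h2 : MemLp (fun r => f r / (r : ℂ)) 2 muRad) :
    ContinuousOn f (Set.Ioi 0) ∧
      Filter.Tendsto f (nhdsWithin 0 (Set.Ioi 0)) (nhds 0) ∧
      Filter.Tendsto f Filter.atTop (nhds 0) := by
  have hf : IntegrableOn (fun r => ‖f r‖ ^ 2 / r) (Ioi 0) := by
    refine (integrableOn_Ioi_sq_norm_mul_of_memLp_muRad h2).congr_fun (fun r hr => ?_)
      measurableSet_Ioi
    dsimp only
    rw [norm_div, Complex.norm_real, Real.norm_of_nonneg hr.le, div_pow]
    field_simp
  have hF : ∀ r ∈ Ioi 0, HasDerivAt (fun r => ‖f r‖ ^ 2) (2 * inner ℝ (f r) (f' r)) r :=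
    fun r hr => (hderiv r hr).norm_sq
  have hF'int := integrableOn_Ioi_two_mul_inner hderiv
    (integrableOn_Ioi_sq_norm_mul_of_memLp_muRad h1) hf
  have hFinv : IntegrableOn (fun r => r⁻¹ • ‖f r‖ ^ 2) (Ioi 0) := by
    simpa only [smul_eq_mul, inv_mul_eq_div] using hf
  have hzero := tendsto_nhdsGT_of_hasDerivAt_of_integrableOn_Ioc zero_lt_one
    (fun r hr => hF r hr.1) (hF'int.mono_set Ioc_subset_Ioi_self)
  have htop := tendsto_limUnder_of_hasDerivAt_of_integrableOn_Ioi hF hF'int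
  refine ⟨fun r hr => (hderiv r hr).continuousAt.continuousWithinAt,
    tendsto_zero_of_tendsto_sq_norm ?_, tendsto_zero_of_tendsto_sq_norm ?_⟩
  · rwa [eq_zero_of_tendsto_of_integrableAtFilter_inv_smul
      not_integrableAtFilter_inv_nhdsGT_zero hzero ⟨Ioi 0, self_mem_nhdsWithin, hFinv⟩] at hzero
  · rwa [eq_zero_of_tendsto_of_integrableAtFilter_inv_smul
      not_integrableAtFilter_inv_atTop htop ⟨Ioi 0, Ioi_mem_atTop 0, hFinv⟩] at htop
end

section
/- The space Ḣ¹_e embeds continuously into L^∞((0,∞)): there is a constant C such that for all f ∈ Ḣ¹_e, ‖f‖_{L^∞} ≤ C (‖∂_r f‖_{L²(r dr)} + ‖f/r‖_{L²(r dr)}). -/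
/-! For `0 < r < s`, the fundamental theorem of calculus for `‖f‖²` gives
`‖f r‖² ≤ ‖f s‖² + 2 ∫_r^∞ ‖f‖ ‖f'‖ dt`, and by Cauchy–Schwarz in `L²(r dr)`,
`∫ ‖f‖ ‖f'‖ dt = ∫ ‖f / t‖ ‖f'‖ t dt ≤ ‖f/r‖ ‖∂_r f‖`.
Since `∫ ‖f‖² / t dt = ‖f/r‖² < ∞` while `1/t` is not integrable at infinity, `‖f s‖` is
arbitrarily small for arbitrarily large `s`. Hence `‖f r‖² ≤ 2 ‖f/r‖ ‖∂_r f‖ ≤ (‖∂_r f‖ + ‖f/r‖)²`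
and `C = 1` works. -/

open MeasureTheory Set
open scoped ENNReal NNReal

open Filter

section CauchySchwarz

variable {α E F : Type*} [MeasurableSpace α] {μ : Measure α}
  [NormedAddCommGroup E] [NormedAddCommGroup F] {g : α → E} {h : α → F}

theorem eLpNorm_one_norm_mul_norm_le (hg : AEStronglyMeasurable g μ)
    (hh : AEStronglyMeasurable h μ) :
    eLpNorm (fun x => ‖g x‖ * ‖h x‖) 1 μ ≤ eLpNorm g 2 μ * eLpNorm h 2 μ := by
  simpa using eLpNorm_le_eLpNorm_mul_eLpNorm'_of_norm hg hh (fun x y => ‖x‖ * ‖y‖) 1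
    (ae_of_all _ fun x => by simp)

theorem integral_norm_mul_norm_le (hg : MemLp g 2 μ) (hh : MemLp h 2 μ) :
    ∫ x, ‖g x‖ * ‖h x‖ ∂μ ≤ (eLpNorm g 2 μ).toReal * (eLpNorm h 2 μ).toReal := by
  have hmeas : AEStronglyMeasurable (fun x => ‖g x‖ * ‖h x‖) μ := hg.1.norm.mul hh.1.norm
  calc ∫ x, ‖g x‖ * ‖h x‖ ∂μ = ∫ x, ‖‖g x‖ * ‖h x‖‖ ∂μ := by simp
    _ = (eLpNorm (fun x => ‖g x‖ * ‖h x‖) 1 μ).toReal := by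
      rw [integral_norm_eq_lintegral_enorm hmeas, eLpNorm_one_eq_lintegral_enorm]
    _ ≤ (eLpNorm g 2 μ * eLpNorm h 2 μ).toReal :=
      ENNReal.toReal_mono (ENNReal.mul_ne_top hg.2.ne hh.2.ne)
        (eLpNorm_one_norm_mul_norm_le hg.1 hh.1)
    _ = _ := ENNReal.toReal_mul

end CauchySchwarz

theorem integrable_muRad_iff {g : ℝ → ℝ} :
    Integrable g muRad ↔ IntegrableOn (fun t => t * g t) (Ioi 0) := by
  rw [muRad, integrable_withDensity_iff ENNReal.measurable_ofReal
    (ae_of_all _ fun _ => ENNReal.ofReal_lt_top)]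
  refine integrableOn_congr_fun (fun t ht => ?_) measurableSet_Ioi
  simp [ENNReal.toReal_ofReal (le_of_lt ht), mul_comm]

theorem integral_muRad (g : ℝ → ℝ) : ∫ t, g t ∂muRad = ∫ t in Ioi 0, t * g t := by
  rw [muRad, integral_withDensity_eq_integral_toReal_smul ENNReal.measurable_ofReal
    (ae_of_all _ fun _ => ENNReal.ofReal_lt_top)]
  refine setIntegral_congr_fun measurableSet_Ioi fun t ht => ?_
  simp [ENNReal.toReal_ofReal (le_of_lt ht)]

theorem mul_norm_div_ofReal {t : ℝ} (ht : 0 < t) (z : ℂ) : t * ‖z / t‖ = ‖z‖ := by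
  rw [norm_div, Complex.norm_real, Real.norm_of_nonneg ht.le, mul_div_cancel₀ _ ht.ne']

theorem frequently_lt_of_integrableOn_Ioi_div {u : ℝ → ℝ} {a ε : ℝ}
    (hu : IntegrableOn (fun t => u t / t) (Ioi a)) (hε : 0 < ε) : ∃ᶠ t in atTop, u t < ε := by
  intro hge
  obtain ⟨R, hR⟩ := eventually_atTop.1 (hge.mono fun t ht => le_of_not_gt ht)
  set R' := max R (max a 1)
  have hR'0 : 0 < R' := lt_of_lt_of_le one_pos ((le_max_right _ _).trans (le_max_right _ _))
  have hinv : IntegrableOn (fun t : ℝ => ε * t⁻¹) (Ioi R') := by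
    refine (hu.mono_set (Ioi_subset_Ioi ((le_max_left _ _).trans (le_max_right _ _)))).mono'
      (by fun_prop) ((ae_restrict_iff' measurableSet_Ioi).2 (ae_of_all _ fun t ht => ?_))
    have ht0 : 0 < t := hR'0.trans ht
    rw [Real.norm_of_nonneg (by positivity), ← div_eq_mul_inv]
    exact div_le_div_of_nonneg_right (hR t ((le_max_left _ _).trans ht.le)) ht0.le
  exact not_integrableOn_Ioi_inv ((integrable_const_mul_iff (IsUnit.mk0 _ hε.ne') _).1 hinv)

section Energy

variable {E : Type*} [NormedAddCommGroup E] [InnerProductSpace ℝ E] {f f' : ℝ → E}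

/-- Only an integrable upper bound for the derivative of `-‖f‖²` is needed, so `f'` need not be
measurable. -/
theorem sq_norm_sub_sq_norm_le_integral {a b : ℝ} (hab : a ≤ b)
    (hderiv : ∀ t ∈ Icc a b, HasDerivAt f (f' t) t)
    (hint : IntegrableOn (fun t => ‖f t‖ * ‖f' t‖) (Icc a b)) :
    ‖f a‖ ^ 2 - ‖f b‖ ^ 2 ≤ 2 * ∫ t in a..b, ‖f t‖ * ‖f' t‖ := by
  have key := intervalIntegral.sub_le_integral_of_hasDeriv_right_of_le hab
    (g := fun t => -‖f t‖ ^ 2) (g' := fun t => -(2 * inner ℝ (f t) (f' t)))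
    (fun t ht => (hderiv t ht).continuousAt.continuousWithinAt.norm.pow 2 |>.neg)
    (fun t ht => (hderiv t (Ioo_subset_Icc_self ht)).norm_sq.neg.hasDerivWithinAt)
    (hint.const_mul 2)
    (fun t _ => by
      have := abs_real_inner_le_norm (f t) (f' t)
      linarith [neg_abs_le (inner ℝ (f t) (f' t))])
  rw [intervalIntegral.integral_const_mul] at key
  linarith

theorem sq_norm_le_two_mul_integral_Ioi {r : ℝ} (hderiv : ∀ t ∈ Ici r, HasDerivAt f (f' t) t)
    (hint : IntegrableOn (fun t => ‖f t‖ * ‖f' t‖) (Ioi r))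
    (hvan : ∀ ε > 0, ∃ᶠ t in atTop, ‖f t‖ ^ 2 < ε) :
    ‖f r‖ ^ 2 ≤ 2 * ∫ t in Ioi r, ‖f t‖ * ‖f' t‖ := by
  refine le_of_forall_pos_lt_add fun ε hε => ?_
  obtain ⟨s, hfs, hrs⟩ := ((hvan ε hε).and_eventually (eventually_gt_atTop r)).exists
  have hIoc : IntegrableOn (fun t => ‖f t‖ * ‖f' t‖) (Ioc r s) := hint.mono_set Ioc_subset_Ioi_self
  have hftc := sq_norm_sub_sq_norm_le_integral hrs.le
    (fun t ht => hderiv t ht.1) ((integrableOn_Icc_iff_integrableOn_Ioc (by finiteness)).2 hIoc)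
  have hmono : ∫ t in r..s, ‖f t‖ * ‖f' t‖ ≤ ∫ t in Ioi r, ‖f t‖ * ‖f' t‖ := by
    rw [intervalIntegral.integral_of_le hrs.le]
    exact setIntegral_mono_set hint (ae_of_all _ fun t => by positivity)
      Ioc_subset_Ioi_self.eventuallyLE
  linarith

end Energy

section Radial

variable {f f' : ℝ → ℂ}

theorem integrableOn_norm_mul_norm_Ioi (hf' : MemLp f' 2 muRad)
    (hfr : MemLp (fun r => f r / (r : ℂ)) 2 muRad) :
    IntegrableOn (fun t => ‖f t‖ * ‖f' t‖) (Ioi 0) :=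
  (integrable_muRad_iff.1 (hfr.norm.integrable_mul hf'.norm)).congr_fun
    (fun t ht => by simp only [Pi.mul_apply, ← mul_assoc, mul_norm_div_ofReal ht]) measurableSet_Ioi

theorem integral_norm_mul_norm_Ioi_le (hf' : MemLp f' 2 muRad)
    (hfr : MemLp (fun r => f r / (r : ℂ)) 2 muRad) :
    ∫ t in Ioi 0, ‖f t‖ * ‖f' t‖ ≤
      (eLpNorm (fun r => f r / (r : ℂ)) 2 muRad).toReal * (eLpNorm f' 2 muRad).toReal :=
  calc ∫ t in Ioi 0, ‖f t‖ * ‖f' t‖ = ∫ t in Ioi 0, t * (‖f t / t‖ * ‖f' t‖) :=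
        setIntegral_congr_fun measurableSet_Ioi fun t ht => by
          rw [← mul_assoc, mul_norm_div_ofReal ht]
    _ = ∫ t, ‖f t / t‖ * ‖f' t‖ ∂muRad := (integral_muRad _).symm
    _ ≤ _ := integral_norm_mul_norm_le hfr hf'

theorem integrableOn_sq_norm_div (hfr : MemLp (fun r => f r / (r : ℂ)) 2 muRad) :
    IntegrableOn (fun t => ‖f t‖ ^ 2 / t) (Ioi 0) :=
  (integrable_muRad_iff.1 ((memLp_two_iff_integrable_sq_norm hfr.1).1 hfr)).congr_fun
    (fun t ht => by
      rw [← mul_norm_div_ofReal ht (f t)]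
      field_simp) measurableSet_Ioi

end Radial

/-- The space `Ḣ¹_e` embeds continuously into `L^∞((0,∞))`: there is a constant `C` such that
`‖f‖_{L^∞} ≤ C (‖∂_r f‖_{L²(r dr)} + ‖f/r‖_{L²(r dr)})` for every `f ∈ Ḣ¹_e`. -/
theorem stmt4 :
    ∃ C : ℝ, 0 < C ∧ ∀ (f f' : ℝ → ℂ),
      (∀ r ∈ Set.Ioi (0:ℝ), HasDerivAt f (f' r) r) →
      MemLp f' 2 muRad →
      MemLp (fun r => f r / (r : ℂ)) 2 muRad →
      ∀ r ∈ Set.Ioi (0:ℝ),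
        ‖f r‖ ≤ C * ((eLpNorm f' 2 muRad).toReal
          + (eLpNorm (fun r => f r / (r : ℂ)) 2 muRad).toReal) := by
  refine ⟨1, one_pos, fun f f' hderiv hf' hfr r hr => ?_⟩
  set A := (eLpNorm f' 2 muRad).toReal
  set B := (eLpNorm (fun r => f r / (r : ℂ)) 2 muRad).toReal
  have hint := integrableOn_norm_mul_norm_Ioi hf' hfr
  have hsq : ‖f r‖ ^ 2 ≤ 2 * ∫ t in Ioi r, ‖f t‖ * ‖f' t‖ :=
    sq_norm_le_two_mul_integral_Ioi (fun t ht => hderiv t (mem_Ioi.2 (hr.trans_le ht)))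
      (hint.mono_set (Ioi_subset_Ioi (le_of_lt hr)))
      (fun ε hε => frequently_lt_of_integrableOn_Ioi_div (integrableOn_sq_norm_div hfr) hε)
  have htail : ∫ t in Ioi r, ‖f t‖ * ‖f' t‖ ≤ ∫ t in Ioi 0, ‖f t‖ * ‖f' t‖ :=
    setIntegral_mono_set hint (ae_of_all _ fun t => by positivity)
      (Ioi_subset_Ioi (le_of_lt hr)).eventuallyLE
  have hCS : ∫ t in Ioi 0, ‖f t‖ * ‖f' t‖ ≤ B * A := integral_norm_mul_norm_Ioi_le hf' hfr
  rw [one_mul, ← pow_le_pow_iff_left₀ (norm_nonneg _) (by positivity) two_ne_zero]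
  nlinarith [sq_nonneg (A - B)]
end

section
/- Let u : ℝ² → S² ⊂ ℝ³ be a 1-equivariant map, u(r,θ) = e^{θR} ū(r), with finite energy E(u) = π ∫_0^∞ (|∂_r ū|² + r^{-2}(ū₁² + ū₂²)) r dr. Define W^± := ∂_r ū ± r^{-1} ū × (k⃗ × ū) (componentwise in ℝ³). Then E(u) = π ‖W^±‖²_{L²(r dr)} ∓ 2π(ū₃(∞) - ū₃(0)), where ū₃(0), ū₃(∞) denote the limits of the third component at 0 and ∞ (assumed to exist). -/
/-!
Since `|ū| = 1`, the vector `ū × (k × ū) = k - ū₃ ū` has squared length `ū₁² + ū₂²`, and since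
`∂_r ū ⊥ ū` its inner product with `∂_r ū` is `∂_r ū₃`. Expanding the square therefore gives
`|W^±|² r = e(r) ± 2 ∂_r ū₃` for the energy density `e`. Both left sides are nonnegative, so
`|∂_r ū₃| ≤ e` is integrable, and the fundamental theorem of calculus on `(0, ∞)`, with the
limits of `ū₃` at both ends, integrates `∂_r ū₃` to `ū₃(∞) - ū₃(0)`.
-/

open MeasureTheory Set Filter Topology Matrix

theorem integral_Ioi_of_hasDerivAt_of_tendsto_nhdsGT {E : Type*} [NormedAddCommGroup E]
    [NormedSpace ℝ E] [CompleteSpace E] {f f' : ℝ → E} {a : ℝ} {m₀ m : E}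
    (hderiv : ∀ x ∈ Ioi a, HasDerivAt f (f' x) x) (f'int : IntegrableOn f' (Ioi a))
    (h_zero : Tendsto f (𝓝[>] a) (𝓝 m₀)) (h_infty : Tendsto f atTop (𝓝 m)) :
    ∫ x in Ioi a, f' x = m - m₀ := by
  rw [← Ici_sdiff_left] at h_zero
  have hderiv' : ∀ x ∈ Ioi a, HasDerivAt (Function.update f a m₀) (f' x) x := fun x hx ↦
    (hderiv x hx).congr_of_eventuallyEq <| by
      filter_upwards [eventually_ne_nhds (ne_of_gt hx)] with y hy
      exact Function.update_of_ne hy m₀ f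
  have h_infty' : Tendsto (Function.update f a m₀) atTop (𝓝 m) :=
    h_infty.congr' <| by
      filter_upwards [eventually_ne_atTop a] with x hx
      exact (Function.update_of_ne hx m₀ f).symm
  simpa using integral_Ioi_of_hasDerivAt_of_tendsto
    (continuousWithinAt_update_same.mpr h_zero) hderiv' f'int h_infty'

theorem dotProduct_eq_zero_of_hasDerivAt_of_sum_sq_eq {ι : Type*} [Fintype ι]
    {u : ℝ → ι → ℝ} {u' : ι → ℝ} {r c : ℝ} {s : Set ℝ} (hs : s ∈ 𝓝 r)
    (hsphere : ∀ ρ ∈ s, ∑ i, u ρ i ^ 2 = c)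
    (hderiv : ∀ i, HasDerivAt (fun ρ ↦ u ρ i) (u' i) r) :
    u r ⬝ᵥ u' = 0 := by
  have hsum : HasDerivAt (fun ρ ↦ ∑ i, u ρ i ^ 2) (∑ i, 2 * u r i * u' i) r := by
    simpa using HasDerivAt.fun_sum fun i _ ↦ (hderiv i).fun_pow 2
  have hconst : HasDerivAt (fun ρ ↦ ∑ i, u ρ i ^ 2) 0 r :=
    (hasDerivAt_const r c).congr_of_eventuallyEq (eventuallyEq_of_mem hs hsphere)
  simpa only [dotProduct, mul_assoc, ← Finset.mul_sum, mul_eq_zero, two_ne_zero, false_or] using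
    hsum.unique hconst

theorem sum_add_mul_sq {ι : Type*} [Fintype ι] (p q : ι → ℝ) (c : ℝ) :
    ∑ i, (p i + c * q i) ^ 2 = ∑ i, p i ^ 2 + 2 * c * (p ⬝ᵥ q) + c ^ 2 * (q ⬝ᵥ q) := by
  simp only [dotProduct, Finset.mul_sum, ← Finset.sum_add_distrib]
  exact Finset.sum_congr rfl fun i _ ↦ by ring

theorem vertical_dotProduct (v : Fin 3 → ℝ) : ![0, 0, 1] ⬝ᵥ v = v 2 := by
  simp [dotProduct, Fin.sum_univ_three]

section UnitVector

variable {v : Fin 3 → ℝ} (hv : v ⬝ᵥ v = 1)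
include hv

theorem cross_cross_vertical_of_dotProduct_self :
    v ⨯₃ (![0, 0, 1] ⨯₃ v) = ![0, 0, 1] - v 2 • v := by
  rw [cross_cross_eq_smul_sub_smul', hv, one_smul, vertical_dotProduct]

theorem dotProduct_self_cross_cross_vertical :
    v ⨯₃ (![0, 0, 1] ⨯₃ v) ⬝ᵥ v ⨯₃ (![0, 0, 1] ⨯₃ v) = v 0 ^ 2 + v 1 ^ 2 := by
  have hk : ![0, 0, 1] ⬝ᵥ ![0, 0, 1] = (1 : ℝ) := by simp
  rw [cross_cross_vertical_of_dotProduct_self hv]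
  simp only [sub_dotProduct, dotProduct_sub, smul_dotProduct, dotProduct_smul, smul_eq_mul,
    vertical_dotProduct, dotProduct_comm v ![0, 0, 1], hv, hk]
  rw [vec3_dotProduct] at hv
  linear_combination (-1 : ℝ) * hv

theorem dotProduct_cross_cross_vertical {v' : Fin 3 → ℝ} (hv' : v ⬝ᵥ v' = 0) :
    v' ⬝ᵥ v ⨯₃ (![0, 0, 1] ⨯₃ v) = v' 2 := by
  rw [cross_cross_vertical_of_dotProduct_self hv, dotProduct_sub, dotProduct_smul,
    dotProduct_comm v' v, hv', dotProduct_comm, vertical_dotProduct, smul_zero, sub_zero]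

variable {v' : Fin 3 → ℝ} (hv' : v ⬝ᵥ v' = 0) {r : ℝ} (hr : r ≠ 0)
include hv' hr

theorem sum_add_cross_cross_vertical_sq_mul :
    (∑ i, (v' i + (1 / r) * (v ⨯₃ (![0, 0, 1] ⨯₃ v)) i) ^ 2) * r
      = ((∑ i, v' i ^ 2) + (v 0 ^ 2 + v 1 ^ 2) / r ^ 2) * r + 2 * v' 2 := by
  rw [sum_add_mul_sq, dotProduct_cross_cross_vertical hv hv',
    dotProduct_self_cross_cross_vertical hv]
  field_simp
  ring

theorem sum_sub_cross_cross_vertical_sq_mul :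
    (∑ i, (v' i - (1 / r) * (v ⨯₃ (![0, 0, 1] ⨯₃ v)) i) ^ 2) * r
      = ((∑ i, v' i ^ 2) + (v 0 ^ 2 + v 1 ^ 2) / r ^ 2) * r - 2 * v' 2 := by
  simp only [sub_eq_add_neg, ← neg_mul]
  rw [sum_add_mul_sq, dotProduct_cross_cross_vertical hv hv',
    dotProduct_self_cross_cross_vertical hv]
  field_simp
  ring

end UnitVector

theorem integrableOn_of_hasDerivAt_of_norm_le {f f' g : ℝ → ℝ} {s : Set ℝ}
    (hs : MeasurableSet s) (hderiv : ∀ x ∈ s, HasDerivAt f (f' x) x)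
    (hg : IntegrableOn g s) (hle : ∀ x ∈ s, ‖f' x‖ ≤ g x) : IntegrableOn f' s := by
  have hmeas : AEStronglyMeasurable f' (volume.restrict s) :=
    (measurable_deriv f).aestronglyMeasurable.congr <| by
      filter_upwards [ae_restrict_mem hs] with x hx
      exact (hderiv x hx).deriv
  exact hg.mono' hmeas <| by
    filter_upwards [ae_restrict_mem hs] with x hx
    exact hle x hx

/-- Energy identity for 1-equivariant maps `u(r,θ) = e^{θR} ū(r)` into `S²`:
with `W^± = ∂_r ū ± r⁻¹ ū × (k × ū)`, one has
`E(u) = π ‖W^±‖²_{L²(r dr)} ∓ 2π(ū₃(∞) - ū₃(0))`. -/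
theorem stmt9 (u u' : ℝ → Fin 3 → ℝ)
    (hsphere : ∀ r ∈ Set.Ioi (0:ℝ), ∑ i, (u r i) ^ 2 = 1)
    (hderiv : ∀ r ∈ Set.Ioi (0:ℝ), ∀ i, HasDerivAt (fun ρ => u ρ i) (u' r i) r)
    (a b : ℝ)
    (h0 : Filter.Tendsto (fun r => u r 2) (nhdsWithin 0 (Set.Ioi 0)) (nhds a))
    (hinf : Filter.Tendsto (fun r => u r 2) Filter.atTop (nhds b))
    (hE : IntegrableOn
      (fun r => ((∑ i, (u' r i) ^ 2) + ((u r 0) ^ 2 + (u r 1) ^ 2) / r ^ 2) * r)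
      (Set.Ioi 0)) :
    (Real.pi * ∫ r in Set.Ioi (0:ℝ),
        ((∑ i, (u' r i) ^ 2) + ((u r 0) ^ 2 + (u r 1) ^ 2) / r ^ 2) * r)
      = Real.pi * (∫ r in Set.Ioi (0:ℝ),
          (∑ i, (u' r i
            + (1 / r) * (crossProduct (u r) (crossProduct ![0, 0, 1] (u r))) i) ^ 2) * r)
        - 2 * Real.pi * (b - a) ∧
    (Real.pi * ∫ r in Set.Ioi (0:ℝ),
        ((∑ i, (u' r i) ^ 2) + ((u r 0) ^ 2 + (u r 1) ^ 2) / r ^ 2) * r)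
      = Real.pi * (∫ r in Set.Ioi (0:ℝ),
          (∑ i, (u' r i
            - (1 / r) * (crossProduct (u r) (crossProduct ![0, 0, 1] (u r))) i) ^ 2) * r)
        + 2 * Real.pi * (b - a) := by
  have hunit (r) (hr : r ∈ Ioi (0 : ℝ)) : u r ⬝ᵥ u r = 1 := by
    simpa [dotProduct, sq] using hsphere r hr
  have hortho (r) (hr : r ∈ Ioi (0 : ℝ)) : u r ⬝ᵥ u' r = 0 :=
    dotProduct_eq_zero_of_hasDerivAt_of_sum_sq_eq (Ioi_mem_nhds hr) hsphere (hderiv r hr)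
  have hplus (r) (hr : r ∈ Ioi (0 : ℝ)) := sum_add_cross_cross_vertical_sq_mul
    (hunit r hr) (hortho r hr) (ne_of_gt hr)
  have hminus (r) (hr : r ∈ Ioi (0 : ℝ)) := sum_sub_cross_cross_vertical_sq_mul
    (hunit r hr) (hortho r hr) (ne_of_gt hr)
  have hint : IntegrableOn (fun r ↦ u' r 2) (Ioi 0) := by
    refine integrableOn_of_hasDerivAt_of_norm_le measurableSet_Ioi (fun r hr ↦ hderiv r hr 2) hE
      fun r hr ↦ ?_
    have hr' : 0 < r := hr
    have hWplus := (hplus r hr).symm.trans_ge (by positivity)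
    have hWminus := (hminus r hr).symm.trans_ge (by positivity)
    rw [Real.norm_eq_abs, abs_le]
    constructor <;> linarith
  have hFTC : ∫ r in Ioi 0, u' r 2 = b - a :=
    integral_Ioi_of_hasDerivAt_of_tendsto_nhdsGT (fun r hr ↦ hderiv r hr 2) hint h0 hinf
  constructor
  · rw [setIntegral_congr_fun measurableSet_Ioi hplus, integral_add hE (hint.const_mul 2),
      integral_const_mul, hFTC]
    ring
  · rw [setIntegral_congr_fun measurableSet_Ioi hminus, integral_sub hE (hint.const_mul 2),
      integral_const_mul, hFTC]
    ring
end
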